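/- arXiv:1009.4621 — 2 statements merged into one kernel-verified Lean document; each statement's English description precedes it below -/
import Mathlib

section
/- Let k be a field of characteristic different from 2 and φ a Pfister form (or more generally an anisotropic quadratic form) over k. If φ becomes hyperbolic (isotropic) over a finite extension L of k of odd degree, then φ is hyperbolic (respectively isotropic) over k. -/
/-!
After fixing a basis, `φ` is `x ↦ ∑ xᵢ xⱼ Mᵢⱼ`. Suppose `φ` is anisotropic over `K` but isotropic
over `K[X]/(p)` with `p` irreducible of odd degree, `deg p` minimal. An isotropic vector lifts to
coprime polynomials `Gᵢ` of degree `< deg p` with `p ∣ φ(G)`. With `m = max deg Gᵢ`, the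
coefficient of `φ(G)` in degree `2m` is the value of `φ` at the vector of degree-`m` coefficients,
hence nonzero, so `φ(G) = p h` with `deg h = 2m - deg p` odd and `< deg p`. An irreducible factor
`q` of `h` of odd degree makes `G mod q` a nonzero isotropic vector over `K[X]/(q)`, contradicting
minimality. An extension of odd degree is a tower of simple extensions `K[X]/(p)` of odd degree.
-/

open Module

/-- A quadratic form is hyperbolic if it admits a totally isotropic subspace of half the
dimension (a Lagrangian); for nondegenerate forms in characteristic ≠ 2 this is the usual
notion of hyperbolicity. -/
def QuadraticForm.IsHyperbolic {k V : Type*} [Field k] [AddCommGroup V] [Module k V]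
    (Q : QuadraticForm k V) : Prop :=
  ∃ N : Submodule k V, (∀ v ∈ N, Q v = 0) ∧ 2 * Module.finrank k N = Module.finrank k V

open Polynomial IntermediateField

universe v

theorem Polynomial.exists_ne_zero_forall_natDegree_le {ι R : Type*} [Fintype ι] [Semiring R]
    {G : ι → R[X]} (hG : G ≠ 0) : ∃ i, G i ≠ 0 ∧ ∀ j, (G j).natDegree ≤ (G i).natDegree := by
  obtain ⟨i₀, hi₀⟩ := Function.ne_iff.mp hG
  obtain ⟨i, -, hi⟩ := Finset.exists_max_image Finset.univ (fun i ↦ (G i).degree)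
    ⟨i₀, Finset.mem_univ _⟩
  refine ⟨i, fun h ↦ hi₀ ?_, fun j ↦ natDegree_le_natDegree (hi j (Finset.mem_univ _))⟩
  simpa [h] using hi i₀ (Finset.mem_univ _)

theorem Polynomial.exists_irreducible_dvd_odd_natDegree {K : Type*} [Field K] {f : K[X]}
    (hf : Odd f.natDegree) : ∃ q, Irreducible q ∧ q ∣ f ∧ Odd q.natDegree := by
  induction f using WfDvdMonoid.induction_on_irreducible with
  | zero => simp at hf
  | unit u hu => simp [natDegree_eq_zero_of_isUnit hu] at hf
  | mul a q ha hq ih =>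
    rw [natDegree_mul hq.ne_zero ha, Nat.odd_add'] at hf
    by_cases hqodd : Odd q.natDegree
    · exact ⟨q, hq, dvd_mul_right q a, hqodd⟩
    · obtain ⟨r, hr, hra, hrodd⟩ := ih (hf.mpr (Nat.not_odd_iff_even.mp hqodd))
      exact ⟨r, hr, hra.mul_left q, hrodd⟩

theorem AdjoinRoot.exists_gcd_eq_one_and_eq_smul_mk {ι K : Type*} [Fintype ι] [Field K]
    [DecidableEq K] {p : K[X]} (hp : p.natDegree ≠ 0) {c : ι → AdjoinRoot p} (hc : c ≠ 0) :
    ∃ G : ι → K[X], Finset.univ.gcd G = 1 ∧ (∀ i, (G i).natDegree < p.natDegree) ∧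
      ∃ a : AdjoinRoot p, c = a • fun i ↦ mk p (G i) := by
  have hlift (i : ι) : ∃ F : K[X], mk p F = c i ∧ F.natDegree < p.natDegree := by
    obtain ⟨F, hF⟩ := mk_surjective (c i)
    refine ⟨F % p, ?_, natDegree_mod_lt F hp⟩
    rw [← hF, mk_eq_mk, EuclideanDomain.mod_eq_sub_mul_div, sub_sub_cancel_left, dvd_neg]
    exact dvd_mul_right p _
  choose F hF hFp using hlift
  have hF0 : F ≠ 0 := by
    rintro rfl
    exact hc (funext fun i ↦ by simp [← hF])
  obtain ⟨i₀, hi₀⟩ := Function.ne_iff.mp hF0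
  obtain ⟨G, hFG, hG⟩ := Finset.univ.extract_gcd F ⟨i₀, Finset.mem_univ _⟩
  have hD : Finset.univ.gcd F ≠ 0 := fun h ↦ hi₀ (by simp [hFG i₀ (Finset.mem_univ _), h])
  refine ⟨G, hG, fun i ↦ ?_, mk p (Finset.univ.gcd F), funext fun i ↦ ?_⟩
  · by_cases hFi : F i = 0
    · rw [hFG i (Finset.mem_univ _), mul_eq_zero, or_iff_right hD] at hFi
      rw [hFi, natDegree_zero]
      exact Nat.pos_of_ne_zero hp
    · exact (natDegree_le_of_dvd ⟨_, (hFG i (Finset.mem_univ _)).trans (mul_comm _ _)⟩ hFi).trans_lt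
        (hFp i)
  · rw [← hF, hFG i (Finset.mem_univ _), map_mul, Pi.smul_apply, smul_eq_mul]

namespace Matrix

variable {ι : Type*} [Fintype ι] [DecidableEq ι]

section CommRing

variable {R S : Type*} [CommRing R] [CommRing S]

theorem toQuadraticForm'_apply (M : Matrix ι ι R) (x : ι → R) :
    M.toQuadraticForm' x = ∑ i, ∑ j, x i * x j * M i j := by
  simp [toQuadraticForm', toLinearMap₂'_apply, mul_comm, mul_left_comm]

theorem toQuadraticForm'_map_apply (f : R →+* S) (M : Matrix ι ι R) (x : ι → R) :
    (M.map f).toQuadraticForm' (fun i ↦ f (x i)) = f (M.toQuadraticForm' x) := by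
  simp [toQuadraticForm'_apply, map_sum]

theorem anisotropic_of_anisotropic_map {f : R →+* S} (hf : Function.Injective f)
    {M : Matrix ι ι R} (h : (M.map f).toQuadraticForm'.Anisotropic) :
    M.toQuadraticForm'.Anisotropic := by
  intro x hx
  have : (fun i ↦ f (x i)) = 0 := h _ (by rw [toQuadraticForm'_map_apply, hx, map_zero])
  funext i
  exact hf (by simpa using congrFun this i)

theorem coeff_toQuadraticForm'_map_C (M : Matrix ι ι R) {G : ι → R[X]} {m : ℕ}
    (hG : ∀ i, (G i).natDegree ≤ m) :
    ((M.map C).toQuadraticForm' G).coeff (m + m) = M.toQuadraticForm' fun i ↦ (G i).coeff m := by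
  simp only [toQuadraticForm'_apply, finsetSum_coeff, map_apply, coeff_mul_C,
    coeff_mul_add_eq_of_natDegree_le (hG _) (hG _)]

theorem natDegree_toQuadraticForm'_map_C_le (M : Matrix ι ι R) {G : ι → R[X]} {m : ℕ}
    (hG : ∀ i, (G i).natDegree ≤ m) : ((M.map C).toQuadraticForm' G).natDegree ≤ m + m := by
  rw [toQuadraticForm'_apply]
  refine natDegree_sum_le_of_forall_le _ _ fun i _ ↦ natDegree_sum_le_of_forall_le _ _ fun j _ ↦ ?_
  exact (natDegree_mul_C_le _ _).trans (natDegree_mul_le.trans (add_le_add (hG i) (hG j)))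

theorem degree_toQuadraticForm'_map_C {M : Matrix ι ι R} (hM : M.toQuadraticForm'.Anisotropic)
    {G : ι → R[X]} {i : ι} (hi : G i ≠ 0) (hG : ∀ j, (G j).natDegree ≤ (G i).natDegree) :
    ((M.map C).toQuadraticForm' G).degree = ↑(2 * (G i).natDegree) := by
  have hlead : (fun j ↦ (G j).coeff (G i).natDegree) ≠ 0 :=
    Function.ne_iff.mpr ⟨i, by simpa using hi⟩
  rw [two_mul]
  refine degree_eq_of_le_of_coeff_ne_zero
    (degree_le_of_natDegree_le (natDegree_toQuadraticForm'_map_C_le M hG)) ?_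
  rw [coeff_toQuadraticForm'_map_C M hG]
  exact fun h ↦ hlead (hM _ h)

end CommRing

variable {K : Type*} [Field K]

theorem exists_irreducible_dvd_toQuadraticForm'_map_C {M : Matrix ι ι K}
    (hM : M.toQuadraticForm'.Anisotropic) {p : K[X]} (hp : Odd p.natDegree) {G : ι → K[X]}
    (hG : G ≠ 0) (hGp : ∀ i, (G i).natDegree < p.natDegree)
    (hpG : p ∣ (M.map C).toQuadraticForm' G) :
    ∃ q, Irreducible q ∧ Odd q.natDegree ∧ q.natDegree < p.natDegree ∧
      q ∣ (M.map C).toQuadraticForm' G := by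
  obtain ⟨i, hi, hmax⟩ := exists_ne_zero_forall_natDegree_le hG
  have hdeg := degree_toQuadraticForm'_map_C hM hi hmax
  obtain ⟨h, hph⟩ := hpG
  have hh : h ≠ 0 := by
    rintro rfl
    exact ne_zero_of_coe_le_degree hdeg.ge (by rw [hph, mul_zero])
  have hsum : p.natDegree + h.natDegree = 2 * (G i).natDegree := by
    rw [← natDegree_mul (ne_zero_of_natDegree_gt (hGp i)) hh, ← hph,
      natDegree_eq_of_degree_eq_some hdeg]
  have hhodd : Odd h.natDegree := by
    have := hGp i
    rw [Nat.odd_iff] at hp ⊢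
    omega
  obtain ⟨q, hq, hqh, hqodd⟩ := exists_irreducible_dvd_odd_natDegree hhodd
  refine ⟨q, hq, hqodd, ?_, hph ▸ hqh.mul_left p⟩
  have := natDegree_le_of_dvd hqh hh
  have := hGp i
  omega

theorem anisotropic_toQuadraticForm'_map_adjoinRoot {M : Matrix ι ι K}
    (hM : M.toQuadraticForm'.Anisotropic) {p : K[X]} (hp : Irreducible p)
    (hodd : Odd p.natDegree) :
    (M.map (algebraMap K (AdjoinRoot p))).toQuadraticForm'.Anisotropic := by
  classical
  induction hn : p.natDegree using Nat.strong_induction_on generalizing p with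
  | _ n ih =>
  have : Fact (Irreducible p) := ⟨hp⟩
  intro c hc
  by_contra hc0
  obtain ⟨G, hG, hGp, a, rfl⟩ := AdjoinRoot.exists_gcd_eq_one_and_eq_smul_mk
    hp.natDegree_pos.ne' hc0
  have hmk (r : K[X]) : AdjoinRoot.mk r ((M.map C).toQuadraticForm' G) =
      (M.map (algebraMap K (AdjoinRoot r))).toQuadraticForm' fun i ↦ AdjoinRoot.mk r (G i) := by
    rw [← toQuadraticForm'_map_apply, Matrix.map_map]
    rfl
  have hpG : p ∣ (M.map C).toQuadraticForm' G := by
    rw [← AdjoinRoot.mk_eq_zero, hmk]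
    rw [QuadraticMap.map_smul, smul_eq_mul, mul_eq_zero, mul_self_eq_zero] at hc
    exact hc.resolve_left fun ha ↦ hc0 (by rw [ha, zero_smul])
  have hG0 : G ≠ 0 := by
    rintro rfl
    exact hc0 (funext fun i ↦ by simp)
  obtain ⟨q, hq, hqodd, hqp, hqG⟩ :=
    exists_irreducible_dvd_toQuadraticForm'_map_C hM hodd hG0 hGp hpG
  have hGq := ih _ (hn ▸ hqp) hq hqodd rfl _ (by rw [← hmk, AdjoinRoot.mk_eq_zero]; exact hqG)
  have : q ∣ Finset.univ.gcd G :=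
    Finset.dvd_gcd fun i _ ↦ AdjoinRoot.mk_eq_zero.mp (congrFun hGq i)
  exact hq.not_isUnit (isUnit_of_dvd_one (hG ▸ this))

theorem anisotropic_toQuadraticForm'_map_adjoin_simple {L : Type*} [Field L] [Algebra K L]
    {M : Matrix ι ι K} (hM : M.toQuadraticForm'.Anisotropic) {α : L} (hα : IsIntegral K α)
    (hodd : Odd (minpoly K α).natDegree) :
    (M.map (algebraMap K K⟮α⟯)).toQuadraticForm'.Anisotropic := by
  let e := adjoinRootEquivAdjoin K hα
  refine anisotropic_of_anisotropic_map (f := e.symm.toRingHom) e.symm.injective ?_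
  convert anisotropic_toQuadraticForm'_map_adjoinRoot hM (minpoly.irreducible hα) hodd
  rw [Matrix.map_map]
  exact congrArg _ (funext e.symm.commutes)

theorem anisotropic_toQuadraticForm'_map_of_odd_finrank {L : Type v} [Field L] [Algebra K L]
    [FiniteDimensional K L] (hodd : Odd (finrank K L)) {M : Matrix ι ι K}
    (hM : M.toQuadraticForm'.Anisotropic) :
    (M.map (algebraMap K L)).toQuadraticForm'.Anisotropic := by
  -- The induction runs over base fields in the universe of `L`; `K` enters as `⊥ ≃ K`.
  suffices key : ∀ (F : Type v) [Field F] [Algebra F L] [FiniteDimensional F L],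
      Odd (finrank F L) → ∀ N : Matrix ι ι F, N.toQuadraticForm'.Anisotropic →
        (N.map (algebraMap F L)).toQuadraticForm'.Anisotropic by
    let e := botEquiv K L
    have hbot :
        (M.map (algebraMap K (⊥ : IntermediateField K L))).toQuadraticForm'.Anisotropic := by
      refine anisotropic_of_anisotropic_map (f := e.toRingHom) e.injective ?_
      convert hM
      ext i j
      exact e.commutes _
    convert key _ ((finrank_bot' (F := K) (E := L)).symm ▸ hodd) _ hbot using 3
    rw [Matrix.map_map, ← RingHom.coe_comp, ← IsScalarTower.algebraMap_eq]
  intro F _ _ _ hodd N hN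
  induction hn : finrank F L using Nat.strong_induction_on generalizing F with
  | _ n ih =>
  by_cases hsurj : Function.Surjective (algebraMap F L)
  · let e := RingEquiv.ofBijective (algebraMap F L) ⟨(algebraMap F L).injective, hsurj⟩
    refine anisotropic_of_anisotropic_map (f := e.symm.toRingHom) e.symm.injective ?_
    convert hN
    ext i j
    exact e.symm_apply_apply _
  · obtain ⟨α, hα⟩ := not_forall.mp hsurj
    have hint : IsIntegral F α := .of_finite F α
    have hmul : finrank F F⟮α⟯ * finrank F⟮α⟯ L = finrank F L := finrank_mul_finrank ..
    obtain ⟨hodd₁, hodd₂⟩ := Nat.odd_mul.mp (hmul ▸ hodd)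
    have hne_one : finrank F F⟮α⟯ ≠ 1 := fun h ↦
      hα (mem_bot.mp (finrank_eq_one_iff.mp h ▸ mem_adjoin_simple_self F α))
    have hlt : finrank F⟮α⟯ L < n := by
      rw [← hn, ← hmul]
      exact lt_mul_left finrank_pos (by have := hodd₁.pos; omega)
    have := ih _ hlt F⟮α⟯ hodd₂ (N.map (algebraMap F F⟮α⟯))
      (anisotropic_toQuadraticForm'_map_adjoin_simple hN hint (adjoin.finrank hint ▸ hodd₁)) rfl
    rwa [Matrix.map_map, ← RingHom.coe_comp, ← IsScalarTower.algebraMap_eq] at this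

end Matrix

theorem QuadraticMap.anisotropic_comp_linearEquiv_iff {R M N P : Type*} [CommSemiring R]
    [AddCommMonoid M] [AddCommMonoid N] [AddCommMonoid P] [Module R M] [Module R N] [Module R P]
    (Q : QuadraticMap R M P) (e : N ≃ₗ[R] M) :
    (Q.comp (e : N →ₗ[R] M)).Anisotropic ↔ Q.Anisotropic := by
  refine ⟨fun h x hx ↦ ?_, fun h x hx ↦ e.map_eq_zero_iff.mp (h _ hx)⟩
  simpa using h (e.symm x) (by simpa using hx)

namespace QuadraticForm

variable {ι R V : Type*} [Fintype ι] [DecidableEq ι] [CommRing R] [Invertible (2 : R)]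
  [AddCommGroup V] [Module R V]

theorem toQuadraticForm'_toMatrix (b : Basis ι R V) (Q : QuadraticForm R V) :
    (Q.toMatrix b).toQuadraticForm' = Q.comp (b.equivFun.symm : (ι → R) →ₗ[R] V) := by
  ext x
  rw [Matrix.toQuadraticForm'_apply, QuadraticMap.comp_apply, LinearEquiv.coe_coe,
    b.equivFun_symm_apply, ← QuadraticMap.associated_eq_self_apply R]
  simp only [toMatrix, LinearMap.toMatrix₂_apply, map_sum, map_smul, LinearMap.coe_sum,
    LinearMap.coe_smul, Finset.sum_apply, Pi.smul_apply, smul_eq_mul, Finset.mul_sum]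
  rw [Finset.sum_comm]
  refine Finset.sum_congr rfl fun i _ ↦ Finset.sum_congr rfl fun j _ ↦ ?_
  ring

theorem anisotropic_iff_toMatrix (b : Basis ι R V) (Q : QuadraticForm R V) :
    Q.Anisotropic ↔ (Q.toMatrix b).toQuadraticForm'.Anisotropic := by
  rw [toQuadraticForm'_toMatrix, QuadraticMap.anisotropic_comp_linearEquiv_iff]

theorem toMatrix_baseChange (A : Type*) [CommRing A] [Algebra R A] [Invertible (2 : A)]
    (b : Basis ι R V) (Q : QuadraticForm R V) :
    (Q.baseChange A).toMatrix (b.baseChange A) = (Q.toMatrix b).map (algebraMap R A) := by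
  ext i j
  simp [toMatrix, LinearMap.toMatrix₂_apply, associated_baseChange, Algebra.algebraMap_eq_smul_one]

end QuadraticForm

/-- Springer's theorem: let `φ` be a Pfister form (the Pfister property,
"isotropic implies hyperbolic", is the hypothesis `hpfister`; for a general form the
isotropy statement is the first conclusion).  If `φ` becomes isotropic (equivalently,
hyperbolic) over a finite extension `L/k` of odd degree, then `φ` is isotropic over `k`,
and hence hyperbolic over `k`. -/
theorem isotropic_and_hyperbolic_of_odd_degree_isotropic
    (k : Type*) [Field k] [Invertible (2 : k)]
    (V : Type*) [AddCommGroup V] [Module k V] [FiniteDimensional k V]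
    (φ : QuadraticForm k V)
    (hpfister : ¬ φ.Anisotropic → φ.IsHyperbolic)
    (L : Type*) [Field L] [Algebra k L] [FiniteDimensional k L]
    (hodd : Odd (Module.finrank k L))
    (hL : ¬ (φ.baseChange L).Anisotropic) :
    ¬ φ.Anisotropic ∧ φ.IsHyperbolic := by
  let : Invertible (2 : L) := (Invertible.map (algebraMap k L) 2).copy 2 (map_ofNat _ _).symm
  let b := finBasis k V
  have hiso : ¬ φ.Anisotropic := fun hφ ↦ hL <| by
    rw [QuadraticForm.anisotropic_iff_toMatrix (b.baseChange L), QuadraticForm.toMatrix_baseChange]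
    exact Matrix.anisotropic_toQuadraticForm'_map_of_odd_finrank hodd
      ((QuadraticForm.anisotropic_iff_toMatrix b φ).mp hφ)
  exact ⟨hiso, hpfister hiso⟩
end

section
/- Let (D, θ) be a division algebra with involution over a field k of characteristic ≠ 2, let L/k be a finite field extension of odd degree, let r* denote base change of hermitian forms from k to L, and let s_* be the Scharlau transfer induced by the k-linear map s : L → k with s(1) = 1 and s(a^j) = 0 for 1 ≤ j < [L:k] (L = k(a)). Then for every hermitian form h over (D, θ), s_*(r*(h)) = h in the Witt group W(D, θ). -/
open scoped TensorProduct
open MulOpposite Module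

/-- A hermitian form on a (left) module `V` over a ring with involution `(D, θ)`. -/
def IsHermitianForm {D : Type*} [Ring D] (θ : RingInvo D)
    {V : Type*} [AddCommGroup V] [Module D V] (h : V → V → D) : Prop :=
  (∀ u v w : V, h (u + v) w = h u w + h v w) ∧
  (∀ u v w : V, h u (v + w) = h u v + h u w) ∧
  (∀ (d : D) (v w : V), h (d • v) w = d * h v w) ∧
  (∀ v w : V, h v w = (θ (h w v)).unop)

/-- Orthogonal sum of two forms. -/
def hermProd {D V W : Type*} [Ring D] [AddCommGroup V] [Module D V]
    [AddCommGroup W] [Module D W] (h₁ : V → V → D) (h₂ : W → W → D) :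
    V × W → V × W → D :=
  fun p q => h₁ p.1 q.1 + h₂ p.2 q.2

/-- A form is metabolic (hyperbolic, in characteristic ≠ 2) if it admits a Lagrangian,
i.e. a submodule equal to its own orthogonal complement. -/
def IsMetabolic {D V : Type*} [Ring D] [AddCommGroup V] [Module D V]
    (h : V → V → D) : Prop :=
  ∃ N : Submodule D V, ∀ v : V, v ∈ N ↔ ∀ w ∈ N, h v w = 0

/-- Two forms represent the same class in the Witt group `W(D, θ)` iff the orthogonal sum
of the first with the negative of the second is metabolic. -/
def WittEquiv {D V W : Type*} [Ring D] [AddCommGroup V] [Module D V]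
    [AddCommGroup W] [Module D W] (h₁ : V → V → D) (h₂ : W → W → D) : Prop :=
  IsMetabolic (hermProd h₁ (fun v w => -(h₂ v w)))

/-- Bayer–Lenstra odd-degree descent: for an odd-degree extension
`L = k(a)` of `k`, char `k ≠ 2`, the Scharlau transfer `s_*` (induced by the `k`-linear
functional `s : L → k` with `s(1) = 1`, `s(aʲ) = 0` for `1 ≤ j < [L:k]`) composed with the
base change `r*` is the identity on the Witt group `W(D, θ)`: `s_*(r*(h)) = h`.
Here `r*(h)` is the base change `hL` of `h` to `(D ⊗ L, θ ⊗ id)` on `V ⊗ L`, characterized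
on pure tensors, and `s_*` applies `sD = id_D ⊗ s` to the values of `hL`, viewing `V ⊗ L`
as a `D`-module. -/
theorem scharlau_transfer_baseChange_wittEquiv
    (k : Type*) [Field k] (hchar : ringChar k ≠ 2)
    (L : Type*) [Field L] [Algebra k L] [FiniteDimensional k L]
    (hodd : Odd (Module.finrank k L))
    (a : L) (hgen : Algebra.adjoin k {a} = ⊤)
    (s : L →ₗ[k] k) (hs1 : s 1 = 1)
    (hsj : ∀ j : ℕ, 1 ≤ j → j < Module.finrank k L → s (a ^ j) = 0)
    (D : Type*) [DivisionRing D] [Algebra k D]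
    (θ : RingInvo D) (hθ : ∀ (c : k) (x : D), θ (c • x) = c • θ x)
    (V : Type*) [AddCommGroup V] [Module D V] [Module k V]
    [IsScalarTower k D V] [SMulCommClass k D V]
    (h : V → V → D) (hherm : IsHermitianForm θ h)
    (hnd : ∀ v : V, v ≠ 0 → ∃ w : V, h v w ≠ 0)
    (hL : (V ⊗[k] L) → (V ⊗[k] L) → (D ⊗[k] L))
    (hLpure : ∀ (v v' : V) (l l' : L), hL (v ⊗ₜ[k] l) (v' ⊗ₜ[k] l') = h v v' ⊗ₜ[k] (l * l'))
    (hLaddl : ∀ u v w, hL (u + v) w = hL u w + hL v w)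
    (hLaddr : ∀ u v w, hL u (v + w) = hL u v + hL u w)
    (sD : D ⊗[k] L →ₗ[k] D) (hsD : ∀ (x : D) (l : L), sD (x ⊗ₜ[k] l) = s l • x) :
    WittEquiv (fun v w => sD (hL v w)) h := by
  classical
  obtain ⟨hadd_l, hadd_r, hsmul_l, _⟩ := hherm
  have hint : IsIntegral k a := Algebra.IsIntegral.isIntegral a
  set n := Module.finrank k L with hn
  obtain ⟨m, hm⟩ := hodd
  -- power basis
  let pb : PowerBasis k L := (Algebra.adjoin.powerBasis hint).map
    ((Subalgebra.equivOfEq _ ⊤ hgen).trans Subalgebra.topEquiv)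
  have hgenpb : pb.gen = a := by
    simp [pb, PowerBasis.map_gen, Algebra.adjoin.powerBasis_gen]
  have hdim : pb.dim = n := by rw [hn, pb.finrank]
  have hdeg : (minpoly k a).natDegree = n := by
    rw [← hgenpb, pb.natDegree_minpoly, hdim]
  have hnpos : 0 < n := Module.finrank_pos
  -- s (a ^ n) ≠ 0 when n ≥ 2
  have san : 2 ≤ n → s (a ^ n) ≠ 0 := by
    intro h2
    have ha : a ≠ 0 := by
      intro ha0
      rw [ha0, minpoly.zero] at hdeg
      simp [Polynomial.natDegree_X] at hdeg
      omega
    have hc0 : (minpoly k a).coeff 0 ≠ 0 := minpoly.coeff_zero_ne_zero hint ha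
    have haev : (Polynomial.aeval a) (minpoly k a) = 0 := minpoly.aeval k a
    rw [Polynomial.aeval_eq_sum_range, hdeg] at haev
    have hthis := congrArg s haev
    rw [map_sum, map_zero, Finset.sum_range_succ] at hthis
    have hlead : (minpoly k a).coeff n = 1 := by
      rw [← hdeg]; exact (minpoly.monic hint).coeff_natDegree
    rw [hlead, one_smul] at hthis
    have hrest : ∑ i ∈ Finset.range n, s ((minpoly k a).coeff i • a ^ i)
        = (minpoly k a).coeff 0 := by
      rw [Finset.sum_eq_single 0]
      · simp [hs1]
      · intro b hb hb0
        rw [map_smul, hsj b (by omega) (Finset.mem_range.mp hb), smul_zero]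
      · intro h0; exact absurd (Finset.mem_range.mpr (by omega)) h0
    rw [hrest] at hthis
    intro hsn
    rw [hsn, add_zero] at hthis
    exact hc0 hthis
  -- basic bilinearity consequences
  have hsuml : ∀ (t : Finset ℕ) (F : ℕ → V) (w : V),
      h (∑ i ∈ t, F i) w = ∑ i ∈ t, h (F i) w := fun t F w =>
    map_sum (AddMonoidHom.mk' (fun u => h u w) fun x y => hadd_l x y w) F t
  have h0r : ∀ v : V, h v 0 = 0 := fun v =>
    map_zero (AddMonoidHom.mk' (h v) fun x y => hadd_r v x y)
  have hsub : ∀ u u' w : V, h (u - u') w = h u w - h u' w := fun u u' w =>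
    map_sub (AddMonoidHom.mk' (fun x => h x w) fun x y => hadd_l x y w) u u'
  have hscal : ∀ (c : k) (u w : V), h (c • u) w = c • h u w := by
    intro c u w
    rw [← algebraMap_smul D c u, hsmul_l, Algebra.smul_def]
  -- nondegeneracy
  have hnd' : ∀ u : V, (∀ w, h u w = 0) → u = 0 := by
    intro u hu
    by_contra hu0
    obtain ⟨w, hw⟩ := hnd u hu0
    exact hw (hu w)
  -- transfer computation
  have hLsuml : ∀ (t : Finset ℕ) (F : ℕ → V ⊗[k] L) (y : V ⊗[k] L),
      hL (∑ i ∈ t, F i) y = ∑ i ∈ t, hL (F i) y := fun t F y =>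
    map_sum (AddMonoidHom.mk' (fun x => hL x y) fun x x' => hLaddl x x' y) F t
  have hLsumr : ∀ (t : Finset ℕ) (x : V ⊗[k] L) (F : ℕ → V ⊗[k] L),
      hL x (∑ i ∈ t, F i) = ∑ i ∈ t, hL x (F i) := fun t x F =>
    map_sum (AddMonoidHom.mk' (hL x) fun y y' => hLaddr x y y') F t
  have calc2 : ∀ (p : ℕ) (F : ℕ → V) (w : V) (j : ℕ),
      sD (hL (∑ i ∈ Finset.range p, F i ⊗ₜ[k] (a ^ i)) (w ⊗ₜ[k] (a ^ j)))
        = ∑ i ∈ Finset.range p, s (a ^ (i + j)) • h (F i) w := by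
    intro p F w j
    rw [hLsuml, map_sum]
    refine Finset.sum_congr rfl fun i _ => ?_
    rw [hLpure, ← pow_add, hsD]
  have calc1 : ∀ (p q : ℕ) (F G : ℕ → V),
      sD (hL (∑ i ∈ Finset.range p, F i ⊗ₜ[k] (a ^ i))
            (∑ j ∈ Finset.range q, G j ⊗ₜ[k] (a ^ j)))
        = ∑ j ∈ Finset.range q, ∑ i ∈ Finset.range p, s (a ^ (i + j)) • h (F i) (G j) := by
    intro p q F G
    rw [hLsumr, map_sum]
    exact Finset.sum_congr rfl fun j _ => calc2 p F (G j) j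
  -- spanning of V ⊗ L by v ⊗ a^i
  have hspan : ∀ x : V ⊗[k] L, ∃ f : ℕ → V,
      x = ∑ i ∈ Finset.range n, f i ⊗ₜ[k] (a ^ i) := by
    intro x
    induction x using TensorProduct.induction_on with
    | zero => exact ⟨0, by simp⟩
    | tmul v l =>
      refine ⟨fun i => if hi : i < pb.dim then pb.basis.repr l ⟨i, hi⟩ • v else 0, ?_⟩
      rw [← hdim]
      have hl : l = ∑ i : Fin pb.dim, pb.basis.repr l i • a ^ (i : ℕ) := by
        conv_lhs => rw [← pb.basis.sum_repr l]
        refine Finset.sum_congr rfl fun i _ => ?_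
        rw [pb.coe_basis, hgenpb]
      calc v ⊗ₜ[k] l = ∑ i : Fin pb.dim, v ⊗ₜ[k] (pb.basis.repr l i • a ^ (i : ℕ)) := by
            rw [← TensorProduct.tmul_sum, ← hl]
        _ = ∑ i : Fin pb.dim, (fun i' : ℕ =>
              (if hi : i' < pb.dim then pb.basis.repr l ⟨i', hi⟩ • v else 0) ⊗ₜ[k] (a ^ i'))
              (i : ℕ) := by
            refine Finset.sum_congr rfl fun i _ => ?_
            simp only [dif_pos i.isLt, Fin.eta]
            rw [TensorProduct.smul_tmul]
        _ = ∑ i ∈ Finset.range pb.dim, (if hi : i < pb.dim then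
              pb.basis.repr l ⟨i, hi⟩ • v else 0) ⊗ₜ[k] (a ^ i) := by
            exact Fin.sum_univ_eq_sum_range (fun i' : ℕ =>
              (if hi : i' < pb.dim then pb.basis.repr l ⟨i', hi⟩ • v else 0) ⊗ₜ[k] (a ^ i'))
              pb.dim
    | add x y hx hy =>
      obtain ⟨f, hf⟩ := hx
      obtain ⟨g, hg⟩ := hy
      refine ⟨f + g, ?_⟩
      rw [hf, hg, ← Finset.sum_add_distrib]
      exact Finset.sum_congr rfl fun i _ => by
        rw [Pi.add_apply, TensorProduct.add_tmul]
  -- the Lagrangian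
  let N : Submodule D ((V ⊗[k] L) × V) :=
    { carrier := {p | ∃ f : ℕ → V,
        p.1 = ∑ i ∈ Finset.range (m + 1), f i ⊗ₜ[k] (a ^ i) ∧ p.2 = f 0}
      add_mem' := by
        rintro p q ⟨f, hf1, hf2⟩ ⟨g, hg1, hg2⟩
        refine ⟨f + g, ?_, ?_⟩
        · rw [Prod.fst_add, hf1, hg1, ← Finset.sum_add_distrib]
          exact Finset.sum_congr rfl fun i _ => by
            rw [Pi.add_apply, TensorProduct.add_tmul]
        · rw [Prod.snd_add, hf2, hg2]; rfl
      zero_mem' := ⟨0, by simp, rfl⟩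
      smul_mem' := by
        rintro d p ⟨f, hf1, hf2⟩
        refine ⟨d • f, ?_, ?_⟩
        · rw [Prod.smul_fst, hf1, Finset.smul_sum]
          exact Finset.sum_congr rfl fun i _ => by
            rw [Pi.smul_apply, TensorProduct.smul_tmul']
        · rw [Prod.smul_snd, hf2]; rfl }
  refine ⟨N, ?_⟩
  intro p
  constructor
  · -- N is totally isotropic
    rintro ⟨f, hf1, hf2⟩ q ⟨g, hg1, hg2⟩
    show sD (hL p.1 q.1) + -(h p.2 q.2) = 0
    rw [hf1, hg1, hf2, hg2, calc1]
    have : ∑ j ∈ Finset.range (m + 1), ∑ i ∈ Finset.range (m + 1),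
        s (a ^ (i + j)) • h (f i) (g j) = h (f 0) (g 0) := by
      rw [Finset.sum_eq_single 0]
      · rw [Finset.sum_eq_single 0]
        · rw [add_zero, pow_zero, hs1, one_smul]
        · intro i hi hi0
          rw [hsj (i + 0) (by omega) (by rw [Finset.mem_range] at hi; omega), zero_smul]
        · intro h0; exact absurd (Finset.mem_range.mpr (by omega)) h0
      · intro j hj hj0
        refine Finset.sum_eq_zero fun i hi => ?_
        rw [Finset.mem_range] at hi hj
        rw [hsj (i + j) (by omega) (by omega), zero_smul]
      · intro h0; exact absurd (Finset.mem_range.mpr (by omega)) h0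
    rw [this, add_neg_cancel]
  · -- orthogonal of N is contained in N
    intro hp
    obtain ⟨f, hf⟩ := hspan p.1
    -- test against (w ⊗ 1, w)
    have test0 : ∀ w : V, h (f 0) w = h p.2 w := by
      intro w
      have hmem : ((∑ i ∈ Finset.range (m + 1),
          (fun i' => if i' = 0 then w else 0) i ⊗ₜ[k] (a ^ i), w) :
          (V ⊗[k] L) × V) ∈ N := ⟨fun i' => if i' = 0 then w else 0, rfl, by simp⟩
      have := hp _ hmem
      simp only [hermProd] at this
      rw [hf] at this
      have hq1 : ∑ i ∈ Finset.range (m + 1),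
          (fun i' => if i' = 0 then w else 0) i ⊗ₜ[k] (a ^ i) = w ⊗ₜ[k] (a ^ 0) := by
        rw [Finset.sum_eq_single 0]
        · simp
        · intro i hi hi0
          simp [hi0, TensorProduct.zero_tmul]
        · intro h0; exact absurd (Finset.mem_range.mpr (by omega)) h0
      rw [hq1, calc2] at this
      have hsum : ∑ i ∈ Finset.range n, s (a ^ (i + 0)) • h (f i) w = h (f 0) w := by
        rw [Finset.sum_eq_single 0]
        · rw [add_zero, pow_zero, hs1, one_smul]
        · intro i hi hi0
          rw [hsj (i + 0) (by omega) (by rw [Finset.mem_range] at hi; omega), zero_smul]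
        · intro h0; exact absurd (Finset.mem_range.mpr (by omega)) h0
      rw [hsum] at this
      exact add_neg_eq_zero.mp this
    have hf0 : f 0 = p.2 := by
      have : ∀ w, h (f 0 - p.2) w = 0 := by
        intro w; rw [hsub, test0, sub_self]
      have := hnd' _ this
      exact sub_eq_zero.mp this
    -- test against (w ⊗ a^j, 0) for 1 ≤ j ≤ m
    have testj : ∀ j : ℕ, 1 ≤ j → j ≤ m → ∀ w : V,
        ∑ i ∈ Finset.range n, s (a ^ (i + j)) • h (f i) w = 0 := by
      intro j hj1 hjm w
      have hmem : ((∑ i ∈ Finset.range (m + 1),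
          (fun i' => if i' = j then w else 0) i ⊗ₜ[k] (a ^ i), (0 : V)) :
          (V ⊗[k] L) × V) ∈ N :=
        ⟨fun i' => if i' = j then w else 0, rfl, (if_neg (by omega : ¬ (0 = j))).symm⟩
      have := hp _ hmem
      simp only [hermProd] at this
      rw [hf] at this
      have hq1 : ∑ i ∈ Finset.range (m + 1),
          (fun i' => if i' = j then w else 0) i ⊗ₜ[k] (a ^ i) = w ⊗ₜ[k] (a ^ j) := by
        rw [Finset.sum_eq_single j]
        · simp
        · intro i hi hi0
          simp [hi0, TensorProduct.zero_tmul]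
        · intro h0; exact absurd (Finset.mem_range.mpr (by omega)) h0
      rw [hq1, calc2, h0r, neg_zero, add_zero] at this
      exact this
    -- kill the high coefficients
    have key : ∀ t : ℕ, ∀ i : ℕ, i < n → m + 1 ≤ i → n ≤ i + t → f i = 0 := by
      intro t
      induction t with
      | zero => intro i h1 h2 h3; omega
      | succ t ih =>
        intro i h1 h2 h3
        have hm1 : 1 ≤ m := by omega
        set j := n - i with hj
        have hj1 : 1 ≤ j := by omega
        have hjm : j ≤ m := by omega
        have hvec : ∑ i' ∈ Finset.range n, s (a ^ (i' + j)) • f i' = 0 := by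
          apply hnd'
          intro w
          rw [← testj j hj1 hjm w, hsuml]
          exact Finset.sum_congr rfl fun i' _ => hscal _ _ _
        have hsingle : ∑ i' ∈ Finset.range n, s (a ^ (i' + j)) • f i'
            = s (a ^ n) • f i := by
          rw [Finset.sum_eq_single i]
          · rw [show i + j = n from by omega]
          · intro i' hi' hne
            rw [Finset.mem_range] at hi'
            rcases lt_or_gt_of_ne hne with hlt | hgt
            · rw [hsj (i' + j) (by omega) (by omega), zero_smul]
            · rw [ih i' hi' (by omega) (by omega), smul_zero]
          · intro h0; exact absurd (Finset.mem_range.mpr h1) h0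
        rw [hsingle] at hvec
        have hsn : s (a ^ n) ≠ 0 := san (by omega)
        have := congrArg (fun u => (s (a ^ n))⁻¹ • u) hvec
        simpa [inv_smul_smul₀ hsn] using this
    have hzero : ∀ i : ℕ, m + 1 ≤ i → i < n → f i = 0 :=
      fun i h1 h2 => key n i h2 h1 (by omega)
    refine ⟨f, ?_, hf0.symm⟩
    rw [hf]
    rw [Finset.range_eq_Ico, ← Finset.sum_Ico_consecutive _ (Nat.zero_le (m + 1)) (by omega),
      ← Finset.range_eq_Ico]
    have : ∑ i ∈ Finset.Ico (m + 1) n, f i ⊗ₜ[k] (a ^ i) = 0 := by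
      refine Finset.sum_eq_zero fun i hi => ?_
      rw [Finset.mem_Ico] at hi
      rw [hzero i hi.1 hi.2, TensorProduct.zero_tmul]
    rw [this, add_zero]
end
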